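/- arXiv:1306.3779 — 4 statements merged into one kernel-verified Lean document; each statement's English description precedes it below -/
import Mathlib

section
/- Let h ∈ ℝⁿ and let 1 ≤ k ≤ n. The maximum of hᵀx over all unit vectors x ∈ ℝⁿ with at most k nonzero entries equals the square root of the sum of the k largest values among h₁², h₂², …, hₙ². -/
theorem stmt1 (n k : ℕ) (hk : 1 ≤ k) (hkn : k ≤ n) (h : Fin n → ℝ) :
    IsGreatest {r : ℝ | ∃ x : Fin n → ℝ, (∑ i, x i ^ 2) = 1 ∧
        (Finset.univ.filter fun i => x i ≠ 0).card ≤ k ∧ r = ∑ i, h i * x i}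
      (Real.sqrt (sSup {s : ℝ | ∃ T : Finset (Fin n), T.card = k ∧ s = ∑ i ∈ T, h i ^ 2})) := by
  classical
  set f : Finset (Fin n) → ℝ := fun T => ∑ i ∈ T, h i ^ 2 with hf
  set F : Finset (Finset (Fin n)) := Finset.univ.powersetCard k with hF
  have hFne : F.Nonempty := by
    obtain ⟨T, hT⟩ := Finset.exists_subset_card_eq
      (show k ≤ (Finset.univ : Finset (Fin n)).card by simpa using hkn)
    exact ⟨T, by simp [hF, Finset.mem_powersetCard, hT.1, hT.2]⟩
  have hset : {s : ℝ | ∃ T : Finset (Fin n), T.card = k ∧ s = ∑ i ∈ T, h i ^ 2}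
      = ↑(F.image f) := by
    ext s
    simp only [Set.mem_setOf_eq, Finset.coe_image, Set.mem_image, Finset.mem_coe,
      hF, Finset.mem_powersetCard]
    constructor
    · rintro ⟨T, hT, rfl⟩; exact ⟨T, ⟨Finset.subset_univ _, hT⟩, rfl⟩
    · rintro ⟨T, ⟨_, hT⟩, rfl⟩; exact ⟨T, hT, rfl⟩
  have hIne : (F.image f).Nonempty := hFne.image f
  have hsup : sSup {s : ℝ | ∃ T : Finset (Fin n), T.card = k ∧ s = ∑ i ∈ T, h i ^ 2}
      = (F.image f).max' hIne := by rw [hset, hIne.csSup_eq_max']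
  set M : ℝ := (F.image f).max' hIne with hM
  -- M is achieved by some T of card k
  obtain ⟨T, hTF, hTM⟩ := Finset.mem_image.mp ((F.image f).max'_mem hIne)
  have hTM' : (∑ i ∈ T, h i ^ 2) = M := hTM
  have hTcard : T.card = k := (Finset.mem_powersetCard.mp hTF).2
  have hMnonneg : 0 ≤ M := hTM' ▸ Finset.sum_nonneg fun i _ => sq_nonneg _
  -- upper bound on f B for B of card k
  have hle : ∀ B : Finset (Fin n), B.card = k → f B ≤ M := by
    intro B hB
    exact (F.image f).le_max' _ (Finset.mem_image.mpr
      ⟨B, Finset.mem_powersetCard.mpr ⟨Finset.subset_univ _, hB⟩, rfl⟩)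
  rw [hsup]
  constructor
  · -- membership
    by_cases hM0 : M = 0
    · -- all h i on T are zero; use a standard basis vector
      obtain ⟨t, ht⟩ := Finset.card_pos.mp (hTcard ▸ hk)
      refine ⟨fun i => if i = t then 1 else 0, ?_, ?_, ?_⟩
      · simp [Finset.sum_ite_eq']
      · calc (Finset.univ.filter fun i => (if i = t then (1:ℝ) else 0) ≠ 0).card
            ≤ ({t} : Finset (Fin n)).card := by
              apply Finset.card_le_card
              intro i hi
              simp only [Finset.mem_filter, ne_eq, ite_eq_right_iff, one_ne_zero] at hi
              simp only [Finset.mem_singleton]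
              by_contra hcon; exact hi.2 (fun heq => hcon heq)
          _ = 1 := Finset.card_singleton t
          _ ≤ k := hk
      · have hht : h t = 0 := by
          have : h t ^ 2 ≤ 0 := by
            rw [← hM0, ← hTM']
            exact Finset.single_le_sum (fun i _ => sq_nonneg (h i)) ht
          nlinarith [sq_nonneg (h t)]
        simp [hM0, Finset.sum_ite_eq', hht, mul_ite]
    · have hMpos : 0 < M := lt_of_le_of_ne hMnonneg (Ne.symm hM0)
      have hc : (0:ℝ) < Real.sqrt M := Real.sqrt_pos.mpr hMpos
      refine ⟨fun i => if i ∈ T then h i / Real.sqrt M else 0, ?_, ?_, ?_⟩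
      · rw [← Finset.sum_subset (Finset.subset_univ T)
          (by intro i _ hi; simp [hi])]
        have : ∑ i ∈ T, (if i ∈ T then h i / Real.sqrt M else 0) ^ 2
            = (∑ i ∈ T, h i ^ 2) / M := by
          rw [Finset.sum_div]
          apply Finset.sum_congr rfl
          intro i hi
          rw [if_pos hi, div_pow, Real.sq_sqrt hMnonneg]
        rw [this, hTM', div_self hM0]
      · calc (Finset.univ.filter fun i =>
              (if i ∈ T then h i / Real.sqrt M else 0) ≠ 0).card
            ≤ T.card := by
              apply Finset.card_le_card
              intro i hi
              simp only [Finset.mem_filter, ne_eq] at hi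
              by_contra hcon
              exact hi.2 (by rw [if_neg hcon])
          _ = k := hTcard
      · rw [← Finset.sum_subset (Finset.subset_univ T)
          (by intro i _ hi; simp [hi])]
        have : ∑ i ∈ T, h i * (if i ∈ T then h i / Real.sqrt M else 0)
            = (∑ i ∈ T, h i ^ 2) / Real.sqrt M := by
          rw [Finset.sum_div]
          apply Finset.sum_congr rfl
          intro i hi
          rw [if_pos hi]; ring
        rw [this, hTM', eq_comm, div_eq_iff (ne_of_gt hc),
          Real.mul_self_sqrt hMnonneg]
  · -- upper bound
    rintro r ⟨x, hx1, hxk, rfl⟩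
    set A : Finset (Fin n) := Finset.univ.filter fun i => x i ≠ 0 with hA
    have hrA : ∑ i, h i * x i = ∑ i ∈ A, h i * x i := by
      rw [← Finset.sum_subset (Finset.subset_univ A)]
      intro i _ hi
      simp only [hA, Finset.mem_filter, Finset.mem_univ, true_and, not_not] at hi
      simp [hi]
    have hxA : ∑ i ∈ A, x i ^ 2 = 1 := by
      rw [← hx1, Finset.sum_subset (Finset.subset_univ A)]
      intro i _ hi
      simp only [hA, Finset.mem_filter, Finset.mem_univ, true_and, not_not] at hi
      simp [hi]
    obtain ⟨B, hAB, hBcard⟩ := Finset.exists_superset_card_eq hxk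
      (by simpa using hkn)
    have hAB2 : f A ≤ f B :=
      Finset.sum_le_sum_of_subset_of_nonneg hAB fun i _ _ => sq_nonneg _
    have hfA : f A ≤ M := hAB2.trans (hle B hBcard)
    have hcs : (∑ i ∈ A, h i * x i) ^ 2 ≤ f A := by
      calc (∑ i ∈ A, h i * x i) ^ 2
          ≤ (∑ i ∈ A, h i ^ 2) * ∑ i ∈ A, x i ^ 2 :=
            Finset.sum_mul_sq_le_sq_mul_sq A h x
        _ = f A := by rw [hxA, mul_one]
    rw [hrA]
    calc ∑ i ∈ A, h i * x i ≤ |∑ i ∈ A, h i * x i| := le_abs_self _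
      _ = Real.sqrt ((∑ i ∈ A, h i * x i) ^ 2) := (Real.sqrt_sq_eq_abs _).symm
      _ ≤ Real.sqrt M := Real.sqrt_le_sqrt (hcs.trans hfA)
end

section
/- Let h ∈ ℝⁿ, 1 ≤ k ≤ n, and let S be the set of unit vectors in ℝⁿ with at most k nonzero entries. Then for all γ > 0 and ν ≥ 0, max_{x ∈ S} ⟨h,x⟩ ≤ Σᵢ max{hᵢ²/(4γ) − ν, 0} + νk + γ. -/
theorem stmt2 (n k : ℕ) (hk : 1 ≤ k) (hkn : k ≤ n) (h : Fin n → ℝ)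
    (γ ν : ℝ) (hγ : 0 < γ) (hν : 0 ≤ ν) (x : Fin n → ℝ)
    (hx1 : (∑ i, x i ^ 2) = 1)
    (hx0 : (Finset.univ.filter fun i => x i ≠ 0).card ≤ k) :
    ∑ i, h i * x i ≤ (∑ i, max (h i ^ 2 / (4 * γ) - ν) 0) + ν * k + γ := by
  have key : ∀ i ∈ Finset.univ, h i * x i ≤
      γ * x i ^ 2 + max (h i ^ 2 / (4 * γ) - ν) 0 + ν * (if x i ≠ 0 then (1:ℝ) else 0) := by
    intro i _
    by_cases hxi : x i = 0
    · simp [hxi]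
    · have hamgm : h i * x i ≤ γ * x i ^ 2 + h i ^ 2 / (4 * γ) := by
        have e : h i ^ 2 / (4 * γ) * (4 * γ) = h i ^ 2 :=
          div_mul_cancel₀ _ (by positivity)
        nlinarith [sq_nonneg (h i - 2 * γ * x i), e, hγ]
      have hmax : h i ^ 2 / (4 * γ) - ν ≤ max (h i ^ 2 / (4 * γ) - ν) 0 := le_max_left _ _
      simp only [hxi, if_pos, ne_eq, not_false_eq_true, mul_one]
      linarith
  have hsum := Finset.sum_le_sum key
  have h1 : ∑ i, (γ * x i ^ 2 + max (h i ^ 2 / (4 * γ) - ν) 0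
      + ν * (if x i ≠ 0 then (1:ℝ) else 0))
      = γ * (∑ i, x i ^ 2) + (∑ i, max (h i ^ 2 / (4 * γ) - ν) 0)
        + ν * ((Finset.univ.filter fun i => x i ≠ 0).card : ℝ) := by
    rw [Finset.sum_add_distrib, Finset.sum_add_distrib, ← Finset.mul_sum, ← Finset.mul_sum,
      Finset.sum_boole]
  have hcard : ν * ((Finset.univ.filter fun i => x i ≠ 0).card : ℝ) ≤ ν * k := by
    apply mul_le_mul_of_nonneg_left _ hν
    exact_mod_cast hx0
  rw [h1, hx1] at hsum
  linarith
end

section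
/- Let h be a standard normal random variable, c > 0, γ > 0 with p := c/(4γ) < 1/2, and ν ≥ 0. Define t = max{h²/(4γ) − ν, 0}. Then E[e^{c·t}] = C·erfc(a/√2) + (1 − erfc(√(2νγ))) where C = e^{−cν}/√(1−2p) and a = 2√(νγ)·√(1−2p). -/
/-!
On `|x| ≤ 2√(νγ)` the truncated exponent vanishes and the integrand is the standard Gaussian
density; outside, the two exponentials combine into the Gaussian
`e^{-cν} e^{-(1-2p) x²/2}/√(2π)`, integrable because `p < 1/2`. The integral is therefore the Gaussian mass of an interval plus the
tail mass of a wider Gaussian, both of which are values of `erf` and `erfc`.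
-/

noncomputable def erf (t : ℝ) : ℝ := (2 / Real.sqrt Real.pi) * ∫ s in (0:ℝ)..t, Real.exp (-s ^ 2)

noncomputable def erfc (t : ℝ) : ℝ := 1 - erf t

open MeasureTheory Real Set

lemma intervalIntegral_exp_neg_sq_neg_self (t : ℝ) :
    ∫ s in (-t)..t, exp (-s ^ 2) = √π * erf t := by
  have hint : ∀ a b : ℝ, IntervalIntegrable (fun s => exp (-s ^ 2)) volume a b :=
    fun a b => (by fun_prop : Continuous fun s : ℝ => exp (-s ^ 2)).intervalIntegrable a b
  have hneg : ∫ s in (-t)..0, exp (-s ^ 2) = ∫ s in (0:ℝ)..t, exp (-s ^ 2) := by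
    have h := intervalIntegral.integral_comp_neg (a := 0) (b := t) fun s => exp (-s ^ 2)
    simp only [neg_sq, neg_zero] at h
    exact h.symm
  rw [← intervalIntegral.integral_add_adjacent_intervals (hint (-t) 0) (hint 0 t), hneg, erf]
  field_simp
  ring

lemma setIntegral_Icc_exp_neg_mul_sq {a : ℝ} (ha : 0 < a) {b : ℝ} (hb : 0 ≤ b) :
    ∫ x in Icc (-b) b, exp (-a * x ^ 2) = √(π / a) * erf (√a * b) := by
  have hsa : 0 < √a := sqrt_pos.mpr ha
  have hscale : ∀ x, exp (-a * x ^ 2) = exp (-(√a * x) ^ 2) := fun x => by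
    rw [mul_pow, sq_sqrt ha.le, neg_mul]
  rw [integral_Icc_eq_integral_Ioc, ← intervalIntegral.integral_of_le (neg_le_self hb)]
  simp_rw [hscale]
  rw [intervalIntegral.integral_comp_mul_left (fun s => exp (-s ^ 2)) hsa.ne', mul_neg,
    intervalIntegral_exp_neg_sq_neg_self, sqrt_div' _ ha.le, smul_eq_mul]
  field_simp

lemma setIntegral_compl_Icc_exp_neg_mul_sq {a : ℝ} (ha : 0 < a) {b : ℝ} (hb : 0 ≤ b) :
    ∫ x in (Icc (-b) b)ᶜ, exp (-a * x ^ 2) = √(π / a) * erfc (√a * b) := by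
  have htotal :=
    integral_add_compl (s := Icc (-b) b) measurableSet_Icc (integrable_exp_neg_mul_sq ha)
  rw [integral_gaussian, setIntegral_Icc_exp_neg_mul_sq ha hb] at htotal
  rw [erfc]
  linarith

lemma sq_div_sub_nonpos_iff_mem_Icc {γ ν : ℝ} (hγ : 0 < γ) (hν : 0 ≤ ν) (x : ℝ) :
    x ^ 2 / (4 * γ) - ν ≤ 0 ↔ x ∈ Icc (-(2 * √(ν * γ))) (2 * √(ν * γ)) := by
  have hb : 0 ≤ 2 * √(ν * γ) := by positivity
  have hb2 : (2 * √(ν * γ)) ^ 2 = 4 * γ * ν := by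
    rw [mul_pow, sq_sqrt (by positivity)]; ring
  rw [sub_nonpos, div_le_iff₀ (by positivity), mul_comm ν, ← hb2, sq_le_sq, abs_of_nonneg hb,
    abs_le, mem_Icc]

lemma exp_mul_max_mul_gaussian_eq_piecewise (c : ℝ) {γ ν : ℝ} (hγ : 0 < γ) (hν : 0 ≤ ν) :
    (fun x : ℝ => exp (c * max (x ^ 2 / (4 * γ) - ν) 0) * (exp (-x ^ 2 / 2) / √(2 * π)))
      = (Icc (-(2 * √(ν * γ))) (2 * √(ν * γ))).piecewise
          (fun x => exp (-(1 / 2) * x ^ 2) / √(2 * π))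
          (fun x => exp (-(c * ν)) / √(2 * π) * exp (-((1 - 2 * (c / (4 * γ))) / 2) * x ^ 2)) := by
  ext x
  by_cases hx : x ∈ Icc (-(2 * √(ν * γ))) (2 * √(ν * γ))
  · rw [piecewise_eq_of_mem _ _ _ hx,
      max_eq_right ((sq_div_sub_nonpos_iff_mem_Icc hγ hν x).mpr hx), mul_zero, exp_zero, one_mul]
    ring_nf
  · have hpos : 0 < x ^ 2 / (4 * γ) - ν :=
      not_le.mp (mt (sq_div_sub_nonpos_iff_mem_Icc hγ hν x).mp hx)
    rw [piecewise_eq_of_notMem _ _ _ hx, max_eq_left hpos.le, mul_div_assoc', div_mul_eq_mul_div,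
      ← exp_add, ← exp_add]
    congr 2
    field_simp
    ring

theorem stmt6_general (c γ ν : ℝ) (hγ : 0 < γ) (hp : c / (4 * γ) < 1 / 2) (hν : 0 ≤ ν) :
    ∫ x : ℝ, Real.exp (c * max (x ^ 2 / (4 * γ) - ν) 0) *
        (Real.exp (-x ^ 2 / 2) / Real.sqrt (2 * Real.pi))
      = (Real.exp (-(c * ν)) / Real.sqrt (1 - 2 * (c / (4 * γ)))) *
          erfc (2 * Real.sqrt (ν * γ) * Real.sqrt (1 - 2 * (c / (4 * γ))) / Real.sqrt 2)
        + (1 - erfc (Real.sqrt (2 * ν * γ))) := by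
  rw [exp_mul_max_mul_gaussian_eq_piecewise c hγ hν]
  set k := 1 - 2 * (c / (4 * γ))
  set b := 2 * √(ν * γ)
  have hk : 0 < k := by linarith
  have hb : 0 ≤ b := by positivity
  rw [integral_piecewise measurableSet_Icc
    ((by fun_prop : Continuous fun x : ℝ => exp (-(1 / 2) * x ^ 2) / √(2 * π)).integrableOn_Icc)
    ((integrable_exp_neg_mul_sq (by positivity)).const_mul _).integrableOn,
    integral_div, integral_const_mul, setIntegral_Icc_exp_neg_mul_sq (by norm_num) hb,
    setIntegral_compl_Icc_exp_neg_mul_sq (by positivity) hb]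
  have hsqrt_half : √(π / (1 / 2)) = √(2 * π) := by rw [div_div_eq_mul_div, div_one, mul_comm]
  have hsqrt_k : √(π / (k / 2)) = √(2 * π) / √k := by
    rw [div_div_eq_mul_div, sqrt_div' _ hk.le, mul_comm]
  have harg_half : √(1 / 2) * b = √(2 * ν * γ) := by
    rw [← sqrt_sq hb, ← sqrt_mul (by norm_num), mul_pow, sq_sqrt (by positivity)]
    ring_nf
  have harg_k : √(k / 2) * b = b * √k / √2 := by
    rw [sqrt_div hk.le]; ring
  rw [hsqrt_half, hsqrt_k, harg_half, harg_k]
  simp only [erfc]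
  field_simp
  ring

theorem stmt6 (c γ ν : ℝ) (hc : 0 < c) (hγ : 0 < γ) (hp : c / (4 * γ) < 1 / 2) (hν : 0 ≤ ν) :
    ∫ x : ℝ, Real.exp (c * max (x ^ 2 / (4 * γ) - ν) 0) *
        (Real.exp (-x ^ 2 / 2) / Real.sqrt (2 * Real.pi))
      = (Real.exp (-(c * ν)) / Real.sqrt (1 - 2 * (c / (4 * γ)))) *
          erfc (2 * Real.sqrt (ν * γ) * Real.sqrt (1 - 2 * (c / (4 * γ))) / Real.sqrt 2)
        + (1 - erfc (Real.sqrt (2 * ν * γ))) :=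
  stmt6_general c γ ν hγ hp hν
end

section
/- Define F(ν) = β·ν² + erfc(ν/√2)·(1 − ν²) + (2ν/√(2π))·e^{−ν²/2} for ν ≥ 0 and β ∈ (0,1). Then F attains its minimum over ν ≥ 0 at ν* = √2·erfinv(1−β), and the minimum value equals β + (2·erfinv(1−β))/(√π·e^{(erfinv(1−β))²}). -/
/-!
`F` is differentiable with `F'(ν) = 2ν (β - erfc(ν/√2))`: the terms produced by differentiating
`erfc(ν/√2)` and the Gaussian density cancel exactly. Since `erfc` is strictly decreasing,
`F'` is `≤ 0` on `[0, ν*]` and `≥ 0` on `[ν*, ∞)`, where `erfc(ν*/√2) = β`, so `ν*` minimises `F`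
on `[0, ∞)`. At `ν*` the quadratic terms `β ν*² - erfc(ν*/√2) ν*²` cancel, leaving the stated value.
-/

open Real Set Filter

noncomputable def erfinv : ℝ → ℝ := Function.invFun erf

theorem isMinOn_Ici_of_hasDerivAt {f f' : ℝ → ℝ} {a c : ℝ} (hac : a ≤ c)
    (hf : ∀ x, HasDerivAt f (f' x) x) (hleft : ∀ x ∈ Ioo a c, f' x ≤ 0)
    (hright : ∀ x ∈ Ioi c, 0 ≤ f' x) : IsMinOn f (Ici a) c := by
  have hcont : Continuous f := continuous_iff_continuousAt.2 fun x => (hf x).continuousAt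
  have hanti : AntitoneOn f (Icc a c) :=
    antitoneOn_of_hasDerivWithinAt_nonpos (convex_Icc a c) hcont.continuousOn
      (fun x _ => (hf x).hasDerivWithinAt) (by simpa only [interior_Icc] using hleft)
  have hmono : MonotoneOn f (Ici c) :=
    monotoneOn_of_hasDerivWithinAt_nonneg (convex_Ici c) hcont.continuousOn
      (fun x _ => (hf x).hasDerivWithinAt) (by simpa only [interior_Ici] using hright)
  intro x (hx : a ≤ x)
  rcases le_total x c with hxc | hcx
  · exact hanti ⟨hx, hxc⟩ ⟨hac, le_rfl⟩ hxc
  · exact hmono self_mem_Ici hcx hcx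

theorem hasDerivAt_erf (x : ℝ) : HasDerivAt erf (2 / √π * exp (-x ^ 2)) x :=
  ((by fun_prop : Continuous fun s : ℝ => exp (-s ^ 2)).integral_hasStrictDerivAt 0 x).hasDerivAt
    |>.const_mul _

theorem continuous_erf : Continuous erf :=
  continuous_iff_continuousAt.2 fun x => (hasDerivAt_erf x).continuousAt

theorem strictMono_erf : StrictMono erf :=
  strictMono_of_hasDerivAt_pos hasDerivAt_erf fun x => by have := pi_pos; positivity

theorem strictAnti_erfc : StrictAnti erfc :=
  fun _ _ h => sub_lt_sub_left (strictMono_erf h) 1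

@[simp]
theorem erf_zero : erf 0 = 0 := by simp [erf]

theorem tendsto_erf_atTop : Tendsto erf atTop (nhds 1) := by
  have hint : MeasureTheory.IntegrableOn (fun s : ℝ => exp (-s ^ 2)) (Ioi 0) := by
    simpa using (integrable_exp_neg_mul_sq one_pos).integrableOn
  have hgauss : ∫ s in Ioi (0:ℝ), exp (-s ^ 2) = √π / 2 := by
    simpa using integral_gaussian_Ioi 1
  have hlim := (MeasureTheory.intervalIntegral_tendsto_integral_Ioi 0 hint tendsto_id).const_mul
    (2 / √π)
  rwa [hgauss, div_mul_div_cancel₀' two_ne_zero, div_self (by positivity)] at hlim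

theorem erf_erfinv {y : ℝ} (hy : y ∈ Ico (0:ℝ) 1) : erf (erfinv y) = y := by
  obtain ⟨t, ht⟩ := (tendsto_erf_atTop.eventually (eventually_ge_nhds hy.2)).exists
  exact Function.invFun_eq
    (mem_range_of_exists_le_of_exists_ge continuous_erf ⟨0, by rw [erf_zero]; exact hy.1⟩ ⟨t, ht⟩)

theorem erfinv_pos {y : ℝ} (hy : y ∈ Ioo (0:ℝ) 1) : 0 < erfinv y := by
  rw [← strictMono_erf.lt_iff_lt, erf_zero, erf_erfinv (Ioo_subset_Ico_self hy)]
  exact hy.1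

theorem hasDerivAt_erfc_div_sqrt_two (ν : ℝ) :
    HasDerivAt (fun ν => erfc (ν / √2)) (-(2 / √(2 * π)) * exp (-ν ^ 2 / 2)) ν := by
  have h := ((hasDerivAt_erf (ν / √2)).comp ν ((hasDerivAt_id ν).div_const √2)).const_sub 1
  refine h.congr_deriv ?_
  rw [div_pow, sq_sqrt zero_le_two, sqrt_mul zero_le_two, neg_div]
  field_simp

/-- The bound `F(ν)` on the `k`-sparse Gaussian maximum, already optimised over the multiplier `γ`. -/
noncomputable def lagrangianBound (β ν : ℝ) : ℝ :=
  β * ν ^ 2 + erfc (ν / √2) * (1 - ν ^ 2) + (2 * ν / √(2 * π)) * exp (-ν ^ 2 / 2)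

theorem hasDerivAt_lagrangianBound (β ν : ℝ) :
    HasDerivAt (lagrangianBound β) (2 * ν * (β - erfc (ν / √2))) ν := by
  have hsq := hasDerivAt_pow 2 ν
  have h := ((hsq.const_mul β).add ((hasDerivAt_erfc_div_sqrt_two ν).mul (hsq.const_sub 1))).add
    (((hasDerivAt_id ν).const_mul 2).div_const √(2 * π) |>.mul (hsq.neg.div_const 2).exp)
  refine h.congr_deriv ?_
  simp only [Pi.neg_apply, id]
  ring

theorem isMinOn_lagrangianBound {β a : ℝ} (ha : 0 ≤ a) (herfc : erfc a = β) :
    IsMinOn (lagrangianBound β) (Ici 0) (√2 * a) := by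
  refine isMinOn_Ici_of_hasDerivAt (by positivity) (hasDerivAt_lagrangianBound β) ?_ ?_
  · intro x ⟨hx0, hxc⟩
    have := strictAnti_erfc ((div_lt_iff₀' (by positivity)).2 hxc)
    nlinarith
  · intro x (hcx : √2 * a < x)
    have := strictAnti_erfc ((lt_div_iff₀' (by positivity)).2 hcx)
    have : 0 < x := lt_of_le_of_lt (by positivity) hcx
    nlinarith

theorem lagrangianBound_sqrt_two_mul {β a : ℝ} (herfc : erfc a = β) :
    lagrangianBound β (√2 * a) = β + 2 * a / (√π * exp (a ^ 2)) := by
  have hexp : exp (-(√2 * a) ^ 2 / 2) = (exp (a ^ 2))⁻¹ := by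
    rw [← exp_neg, mul_pow, sq_sqrt zero_le_two]
    ring_nf
  rw [lagrangianBound, mul_div_cancel_left₀ a (by positivity), herfc, hexp, mul_pow,
    sq_sqrt zero_le_two, sqrt_mul zero_le_two]
  field_simp
  ring

theorem stmt11 (β : ℝ) (hβ : β ∈ Set.Ioo (0:ℝ) 1) :
    let F : ℝ → ℝ := fun ν => β * ν ^ 2 + erfc (ν / Real.sqrt 2) * (1 - ν ^ 2) +
      (2 * ν / Real.sqrt (2 * Real.pi)) * Real.exp (-ν ^ 2 / 2)
    let νs : ℝ := Real.sqrt 2 * erfinv (1 - β)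
    0 ≤ νs ∧ (∀ ν, 0 ≤ ν → F νs ≤ F ν) ∧
      F νs = β + 2 * erfinv (1 - β) / (Real.sqrt Real.pi * Real.exp (erfinv (1 - β) ^ 2)) := by
  intro F νs
  have hy : 1 - β ∈ Ioo (0:ℝ) 1 := ⟨sub_pos.2 hβ.2, sub_lt_self 1 hβ.1⟩
  have ha : 0 < erfinv (1 - β) := erfinv_pos hy
  have herfc : erfc (erfinv (1 - β)) = β := by
    rw [erfc, erf_erfinv (Ioo_subset_Ico_self hy), sub_sub_cancel]
  exact ⟨by positivity, fun ν hν => isMinOn_lagrangianBound ha.le herfc hν,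
    lagrangianBound_sqrt_two_mul herfc⟩
end
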